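/- Let f be an r×s complex matrix of rank s (full column rank), and let H : ℝ → (r×r complex matrices) be a differentiable family of positive-definite Hermitian matrices. Set J(t) = fᴴ H(t) f and let π(t) = f J(t)⁻¹ fᴴ H(t) be the H(t)-orthogonal projection onto the column space of f. Then π is differentiable and π'(t) = π(t) · (H(t)⁻¹H'(t)) · (I − π(t)). -/

import Mathlib

open Matrix
open scoped ComplexOrder

/-!
`J = fᴴ H f` is positive definite because `f` is injective, so `J⁻¹` is differentiable with
`(J⁻¹)' = -J⁻¹ J' J⁻¹` and `J' = fᴴ H' f`. The product rule then gives
`π' = -f J⁻¹ fᴴ H' f J⁻¹ fᴴ H + f J⁻¹ fᴴ H'`, and since `π H⁻¹ H' = f J⁻¹ fᴴ H'` this is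
`π H⁻¹ H' (1 - π)`.
-/

namespace Matrix

theorem mulVec_injective_of_rank_eq {K m n : Type*} [Field K] [Fintype m] [Fintype n]
    {A : Matrix m n K} (hA : A.rank = Fintype.card n) : Function.Injective A.mulVec := by
  have hdim := A.mulVecLin.finrank_range_add_finrank_ker
  rw [← rank, hA, Module.finrank_fintype_fun_eq_card] at hdim
  have hker : LinearMap.ker A.mulVecLin = ⊥ := Submodule.finrank_eq_zero.mp (by omega)
  exact LinearMap.ker_eq_bot.mp hker

theorem projection_mul_inv_mul_one_sub_projection {R m n : Type*} [CommRing R] [Fintype m]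
    [DecidableEq m] [Fintype n] {H : Matrix m m R} (hH : IsUnit H) (f : Matrix m n R)
    (K : Matrix n n R) (g : Matrix n m R) (H' : Matrix m m R) :
    f * K * g * H * (H⁻¹ * H') * (1 - f * K * g * H) =
      f * -(K * (g * H' * f) * K) * g * H + f * K * g * H' := by
  have hHH (X : Matrix m m R) : H * (H⁻¹ * X) = X :=
    mul_nonsing_inv_cancel_left (A := H) X ((isUnit_iff_isUnit_det H).mp hH)
  simp only [Matrix.mul_sub, Matrix.mul_one, Matrix.mul_neg, Matrix.neg_mul, Matrix.mul_assoc,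
    hHH]
  abel

section Calculus

variable {𝕜 𝔸 : Type*} [NontriviallyNormedField 𝕜] [NormedCommRing 𝔸] [NormedAlgebra 𝕜 𝔸]
  {m n p : Type*} [Fintype n] [Fintype p] {t : 𝕜}

theorem hasDerivAt_iff_hasDerivAt_apply {M : 𝕜 → Matrix m n 𝔸} {M' : Matrix m n 𝔸} :
    HasDerivAt M M' t ↔ ∀ i j, HasDerivAt (fun u => M u i j) (M' i j) t := by
  simp_rw [← hasDerivAt_pi]
  exact hasDerivAt_pi

theorem _root_.HasDerivAt.matrix_mul {A : 𝕜 → Matrix m n 𝔸} {A' : Matrix m n 𝔸}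
    {B : 𝕜 → Matrix n p 𝔸} {B' : Matrix n p 𝔸} (hA : HasDerivAt A A' t)
    (hB : HasDerivAt B B' t) :
    HasDerivAt (fun u => A u * B u) (A' * B t + A t * B') t := by
  rw [hasDerivAt_iff_hasDerivAt_apply] at hA hB ⊢
  intro i j
  simp only [add_apply, mul_apply, ← Finset.sum_add_distrib]
  exact HasDerivAt.fun_sum fun k _ => (hA i k).mul (hB k j)

theorem _root_.HasDerivAt.const_matrix_mul (C : Matrix m n 𝔸) {B : 𝕜 → Matrix n p 𝔸}
    {B' : Matrix n p 𝔸} (hB : HasDerivAt B B' t) :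
    HasDerivAt (fun u => C * B u) (C * B') t := by
  have hC : HasDerivAt (fun _ => C) (0 : Matrix m n 𝔸) t :=
    hasDerivAt_iff_hasDerivAt_apply.2 fun i j => hasDerivAt_const t (C i j)
  simpa using hC.matrix_mul hB

theorem _root_.HasDerivAt.matrix_mul_const {A : 𝕜 → Matrix m n 𝔸} {A' : Matrix m n 𝔸}
    (hA : HasDerivAt A A' t) (C : Matrix n p 𝔸) :
    HasDerivAt (fun u => A u * C) (A' * C) t := by
  have hC : HasDerivAt (fun _ => C) (0 : Matrix n p 𝔸) t :=
    hasDerivAt_iff_hasDerivAt_apply.2 fun i j => hasDerivAt_const t (C i j)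
  simpa using hA.matrix_mul hC

theorem _root_.HasDerivAt.matrix_inv [CompleteSpace 𝔸] [DecidableEq n]
    {A : 𝕜 → Matrix n n 𝔸} {A' : Matrix n n 𝔸} (hA : HasDerivAt A A' t)
    (hunit : IsUnit (A t)) :
    HasDerivAt (fun u => (A u)⁻¹) (-((A t)⁻¹ * A' * (A t)⁻¹)) t := by
  let _ := Matrix.linftyOpNormedRing (n := n) (α := 𝔸)
  let _ := Matrix.linftyOpNormedAlgebra (R := 𝕜) (n := n) (α := 𝔸)
  -- The ℓ∞-operator norm induces the product uniformity, so the matrices form a Banach algebra.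
  have : @CompleteSpace (Matrix n n 𝔸) PseudoMetricSpace.toUniformSpace :=
    (inferInstance : CompleteSpace (Matrix n n 𝔸))
  obtain ⟨u, hu⟩ := hunit
  have hinv : HasFDerivAt Ring.inverse _ (A t) := hu ▸ hasFDerivAt_ringInverse (𝕜 := 𝕜) u
  simp only [nonsing_inv_eq_ringInverse, ← hu, Ring.inverse_unit]
  exact hinv.comp_hasDerivAt t hA

end Calculus

end Matrix

/-- Let `f` be an `r × s` complex matrix of rank `s` (full column
rank), and let `H : ℝ → Matrix (Fin r) (Fin r) ℂ` be a differentiable family of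
positive-definite Hermitian matrices with (entrywise) derivative `H'`.  Set
`J t = fᴴ H(t) f` and let `π t = f (J t)⁻¹ fᴴ H t` be the `H t`-orthogonal
projection onto the column space of `f`.  Then `π` is differentiable and
`π'(t) = π t · ((H t)⁻¹ H' t) · (I − π t)` (entrywise). -/
theorem statement12 (r s : ℕ) (f : Matrix (Fin r) (Fin s) ℂ) (hf : f.rank = s)
    (H H' : ℝ → Matrix (Fin r) (Fin r) ℂ)
    (hH : ∀ t, (H t).PosDef)
    (hH' : ∀ (i j : Fin r) (t : ℝ), HasDerivAt (fun u => H u i j) (H' t i j) t)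
    (J : ℝ → Matrix (Fin s) (Fin s) ℂ)
    (hJ : ∀ t, J t = fᴴ * H t * f)
    (π : ℝ → Matrix (Fin r) (Fin r) ℂ)
    (hπ : ∀ t, π t = f * (J t)⁻¹ * fᴴ * H t) :
    ∀ (i j : Fin r) (t : ℝ), HasDerivAt (fun u => π u i j)
      ((π t * ((H t)⁻¹ * H' t) * (1 - π t)) i j) t := by
  intro i j t
  have hHd : HasDerivAt H (H' t) t :=
    hasDerivAt_iff_hasDerivAt_apply.2 fun i j => hH' i j t
  have hJd : HasDerivAt J (fᴴ * H' t * f) t := by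
    rw [funext hJ]
    exact (hHd.const_matrix_mul fᴴ).matrix_mul_const f
  have hJunit : IsUnit (J t) := by
    rw [hJ]
    exact ((hH t).conjTranspose_mul_mul_same
      (mulVec_injective_of_rank_eq (by rw [hf, Fintype.card_fin]))).isUnit
  have hπd := (((hJd.matrix_inv hJunit).const_matrix_mul f).matrix_mul_const fᴴ).matrix_mul hHd
  rw [← funext hπ] at hπd
  rw [hπ, projection_mul_inv_mul_one_sub_projection (hH t).isUnit]
  exact hasDerivAt_iff_hasDerivAt_apply.1 hπd i j
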